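/- arXiv:0806.1776 — 2 statements merged into one kernel-verified Lean document; each statement's English description precedes it below -/
import Mathlib

section
/- For any two lattice paths p and q in the staircase, if they are non-crossing (one weakly northwest of the other) then every proper common part of p and q at which they separate is a kiss, and if they are non-kissing then every proper common part at which they separate is a crossing. Consequently, two distinct paths that are simultaneously non-crossing and non-kissing have no proper common parts where they meet and separate, except possibly sharing a prefix or suffix. -/
open Finset

/-- Pairs `{u<v}` and `{x<y}` (values in `ℕ ∪ {∞}`) are non-nesting if
neither `x<u<v<y` nor `u<x<y<v`. -/
def PairNonNesting (u v x y : WithTop ℕ) : Prop :=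
  ¬ (x < u ∧ u < v ∧ v < y) ∧ ¬ (u < x ∧ x < y ∧ y < v)

/-- Pairs `{u<v}` and `{x<y}` are non-crossing if neither `x<u<y<v` nor `u<x<v<y`. -/
def PairNonCrossing (u v x y : WithTop ℕ) : Prop :=
  ¬ (x < u ∧ u < y ∧ y < v) ∧ ¬ (u < x ∧ x < v ∧ v < y)

/-- Remove one common entry (equal entries in equal positions) from the two lists. -/
def stripOnce (I J : List ℕ) : Option (List ℕ × List ℕ) :=
  ((List.range (min I.length J.length)).find? (fun s => I.getD s 0 == J.getD s 0)).map
    (fun s => (I.eraseIdx s, J.eraseIdx s))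

def stripAux : ℕ → List ℕ → List ℕ → List ℕ × List ℕ
  | 0, I, J => (I, J)
  | n+1, I, J =>
    match stripOnce I J with
    | none => (I, J)
    | some (I', J') => stripAux n I' J'

/-- Repeatedly remove the "common part" (equal entries in equal positions). -/
def strip (I J : List ℕ) : List ℕ × List ℕ := stripAux I.length I J

/-- The `s`-th entry (0-indexed) of the list, viewed in `ℕ ∪ {∞}`, with `∞` beyond the end. -/
def entry (l : List ℕ) (s : ℕ) : WithTop ℕ :=
  (l.map (fun a => (a : WithTop ℕ))).getD s ⊤

/-- Non-nesting condition on sorted lists `I`, `J` with `I` the shorter one: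
after removing the common part, all consecutive-difference pairs are non-nesting
(with the `∞` convention for the shorter list). -/
def ListsNonNesting (I J : List ℕ) : Prop :=
  ∀ s : ℕ, s + 1 < (strip I J).2.length →
    PairNonNesting (entry (strip I J).1 s) (entry (strip I J).1 (s+1))
      (entry (strip I J).2 s) (entry (strip I J).2 (s+1))

def ListsNonCrossing (I J : List ℕ) : Prop :=
  ∀ s : ℕ, s + 1 < (strip I J).2.length →
    PairNonCrossing (entry (strip I J).1 s) (entry (strip I J).1 (s+1))
      (entry (strip I J).2 s) (entry (strip I J).2 (s+1))

/-- The increasing list of elements of a finite set. -/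
def sortedList (I : Finset ℕ) : List ℕ := I.sort (· ≤ ·)

/-- Subsets `I`, `J` are non-nesting. -/
def SetsNonNesting (I J : Finset ℕ) : Prop :=
  if I.card ≤ J.card then ListsNonNesting (sortedList I) (sortedList J)
  else ListsNonNesting (sortedList J) (sortedList I)

/-- Subsets `I`, `J` are non-crossing. -/
def SetsNonCrossing (I J : Finset ℕ) : Prop :=
  if I.card ≤ J.card then ListsNonCrossing (sortedList I) (sortedList J)
  else ListsNonCrossing (sortedList J) (sortedList I)

/-- `A ≺ B`: every element of `A` is smaller than every element of `B`. -/
def Precedes (A B : Finset ℕ) : Prop := ∀ a ∈ A, ∀ b ∈ B, a < b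

/-- Leclerc–Zelevinsky weak separation. -/
def WeaklySeparated (I J : Finset ℕ) : Prop :=
  (J.card ≤ I.card ∧ ∃ J₁ J₂ : Finset ℕ, Disjoint J₁ J₂ ∧ J \ I = J₁ ∪ J₂ ∧
    Precedes J₁ (I \ J) ∧ Precedes (I \ J) J₂) ∨
  (I.card ≤ J.card ∧ ∃ I₁ I₂ : Finset ℕ, Disjoint I₁ I₂ ∧ I \ J = I₁ ∪ I₂ ∧
    Precedes I₁ (J \ I) ∧ Precedes (J \ I) I₂)

/-- Number of north steps of the path `p(I)` among its first `k` steps. -/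
def northCount (I : Finset ℕ) (k : ℕ) : ℕ := (I.filter (fun i => i ≤ k)).card

/-- Paths `p(I)`, `p(J)` are non-crossing: one lies weakly northwest of the other
along their entire length. -/
def PathsNonCrossing (I J : Finset ℕ) : Prop :=
  (∀ k, northCount J k ≤ northCount I k) ∨ (∀ k, northCount I k ≤ northCount J k)

/-- `[k₁, k₂]` (in step coordinates) is a proper common part of the paths `p(I)`, `p(J)`
of length `m`: a maximal shared connected subpath containing neither the source nor an
endpoint.  Maximality is expressed by the two paths separating just before `k₁` and just
after `k₂`. -/
def ProperCommonPart (m : ℕ) (I J : Finset ℕ) (k₁ k₂ : ℕ) : Prop :=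
  1 ≤ k₁ ∧ k₁ ≤ k₂ ∧ k₂ < m ∧
  (∀ k, k₁ ≤ k → k ≤ k₂ → northCount I k = northCount J k) ∧
  northCount I (k₁ - 1) ≠ northCount J (k₁ - 1) ∧
  northCount I (k₂ + 1) ≠ northCount J (k₂ + 1)

/-- Paths `p(I)`, `p(J)` are non-kissing: at every proper common part each path leaves
in the same direction in which it entered (the common part is a crossing, not a kiss). -/
def PathsNonKissing (m : ℕ) (I J : Finset ℕ) : Prop :=
  ∀ k₁ k₂, ProperCommonPart m I J k₁ k₂ → ((k₁ ∈ I) ↔ (k₂ + 1 ∈ I))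

/-- Number of north steps among the first `k` steps, for `k ∈ ℤ` (zero for `k ≤ 0`). -/
def northCountZ (I : Finset ℕ) (k : ℤ) : ℤ := (northCount I k.toNat : ℤ)

/-- The indicator Gelfand–Tsetlin pattern of the path `p(I)`: the cell
`[x,x+1] × [y,y+1]` gets a `1` if it lies southeast of the path and `0` if northwest. -/
noncomputable def Tpat (I : Finset ℕ) (x y : ℤ) : ℝ :=
  if y + 1 ≤ northCountZ I (x + y + 1) then 1 else 0

/-- `(x,y)` is a node of the partial staircase `L ⊆ L_m` with set of sink heights `A`:
it lies (weakly) southwest of some sink `(m-j, j)`, `j ∈ A`. -/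
def NodeL (m : ℕ) (A : Finset ℕ) (x y : ℤ) : Prop :=
  0 ≤ x ∧ 0 ≤ y ∧ ∃ j ∈ A, x + j ≤ m ∧ y ≤ j

/-- Same, with natural-number coordinates. -/
def InL (m : ℕ) (A : Finset ℕ) (x y : ℕ) : Prop :=
  ∃ j ∈ A, x + j ≤ m ∧ y ≤ j

/-- The path `p(I)` is contained in the partial staircase with sink heights `A`. -/
def PathInL (m : ℕ) (A : Finset ℕ) (I : Finset ℕ) : Prop :=
  ∀ k ≤ m, InL m A (k - northCount I k) (northCount I k)

/-- A critical node has edges of `L` leaving it toward both the north and the east. -/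
def CriticalNode (m : ℕ) (A : Finset ℕ) (x y : ℕ) : Prop :=
  InL m A (x + 1) y ∧ InL m A x (y + 1)

open Classical in
/-- `N(L)`: the number of critical nodes of the partial staircase. -/
noncomputable def numCritical (m : ℕ) (A : Finset ℕ) : ℕ :=
  ((Finset.range (m+1) ×ˢ Finset.range (m+1)).filter
    (fun p => CriticalNode m A p.1 p.2)).card

lemma northCount_succ (S : Finset ℕ) (k : ℕ) :
    northCount S (k+1) = northCount S k + (if k+1 ∈ S then 1 else 0) := by
  unfold northCount
  have hset : S.filter (fun i => i ≤ k + 1)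
      = S.filter (fun i => i ≤ k) ∪ S.filter (fun i => i = k + 1) := by
    rw [← Finset.filter_or]
    apply Finset.filter_congr
    intro i _
    constructor <;> intro h <;> omega
  rw [hset, Finset.card_union_of_disjoint, Finset.filter_eq']
  · split <;> simp
  · rw [Finset.disjoint_left]
    intro a ha hb
    simp only [Finset.mem_filter] at ha hb
    omega

/-- If two lattice paths are non-crossing then every proper common part at which they
separate is a kiss; if they are non-kissing then every proper common part at which they
separate is a crossing.  Consequently, two distinct paths that are simultaneously
non-crossing and non-kissing have no proper common parts where they meet and separate
(prefixes and suffixes are excluded from proper common parts by definition). -/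
theorem nonCrossing_kiss_nonKissing_cross (m : ℕ) (I J : Finset ℕ)
    (hI : I ⊆ Finset.Icc 1 m) (hJ : J ⊆ Finset.Icc 1 m) :
    (PathsNonCrossing I J →
      ∀ k₁ k₂, ProperCommonPart m I J k₁ k₂ → ¬ ((k₁ ∈ I) ↔ (k₂ + 1 ∈ I))) ∧
    (PathsNonKissing m I J →
      ∀ k₁ k₂, ProperCommonPart m I J k₁ k₂ → ((k₁ ∈ I) ↔ (k₂ + 1 ∈ I))) ∧
    (I ≠ J → PathsNonCrossing I J → PathsNonKissing m I J →
      ∀ k₁ k₂, ¬ ProperCommonPart m I J k₁ k₂) := by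
  have key : PathsNonCrossing I J →
      ∀ k₁ k₂, ProperCommonPart m I J k₁ k₂ → ¬ ((k₁ ∈ I) ↔ (k₂ + 1 ∈ I)) := by
    rintro hnc k₁ k₂ ⟨h1, h12, h2m, heq, hne1, hne2⟩ hiff
    obtain ⟨k, rfl⟩ : ∃ k, k₁ = k + 1 := ⟨k₁ - 1, by omega⟩
    have e1 : northCount I (k+1) = northCount J (k+1) := heq (k+1) le_rfl h12
    have e2 : northCount I k₂ = northCount J k₂ := heq k₂ h12 le_rfl
    have sI1 := northCount_succ I k
    have sJ1 := northCount_succ J k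
    have sI2 := northCount_succ I k₂
    have sJ2 := northCount_succ J k₂
    simp only [Nat.add_sub_cancel] at hne1
    have hcmp : (northCount J k ≤ northCount I k ∧
          northCount J (k₂+1) ≤ northCount I (k₂+1)) ∨
        (northCount I k ≤ northCount J k ∧
          northCount I (k₂+1) ≤ northCount J (k₂+1)) := by
      rcases hnc with h | h
      · exact Or.inl ⟨h k, h (k₂+1)⟩
      · exact Or.inr ⟨h k, h (k₂+1)⟩
    by_cases hI1 : k + 1 ∈ I <;> by_cases hI2 : k₂ + 1 ∈ I <;>
      by_cases hJ1 : k + 1 ∈ J <;> by_cases hJ2 : k₂ + 1 ∈ J <;>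
      simp only [hI1, hI2, hJ1, hJ2, if_true, if_false, iff_true, iff_false,
        not_true_eq_false, not_false_eq_true, if_pos, if_neg] at sI1 sJ1 sI2 sJ2 hiff <;>
      first
        | exact hiff
        | (rcases hcmp with ⟨c1, c2⟩ | ⟨c1, c2⟩ <;> omega)
  exact ⟨key, fun h => h,
    fun _ hnc hnk k₁ k₂ hpcp => key hnc k₁ k₂ hpcp (hnk k₁ k₂ hpcp)⟩
end

section
/- If P is a collection of pairwise non-kissing lattice paths contained in a partial staircase L, then |P̄| ≤ N(L) + 1, where P̄ is the set of distinct paths in P and N(L) is the number of critical nodes of L (nodes with both a north and an east outgoing edge in L). -/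
/-!
Follow the paths of `P` step by step and count the distinct prefixes ("streams"). There is
one stream at the source, and a stream splits in two after step `k` only if it is shared by a
path going north at step `k + 1` and by one going east; it then ends at a critical node. Two
different splitting streams cannot end at the same node: after their last disagreement they
form a proper common part of a north-going path of one with an east-going path of the other,
and the non-kissing condition would force the paths of one stream to enter it from two
different directions.
-/

open Finset

/-- `I ∩ [0, k]`, which encodes the first `k` steps of the path `p(I)`. -/
def truncAt (I : Finset ℕ) (k : ℕ) : Finset ℕ := I.filter (· ≤ k)

/-- The streams of `P` that split after step `k`: prefixes of length `k` shared by a path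
of `P` going north at step `k + 1` and by one going east. -/
def branchPrefixes (P : Finset (Finset ℕ)) (k : ℕ) : Finset (Finset ℕ) :=
  (P.filter (k + 1 ∈ ·)).image (truncAt · k) ∩ (P.filter (k + 1 ∉ ·)).image (truncAt · k)

section Prefixes

variable {I J : Finset ℕ} {j k : ℕ}

theorem northCount_eq_card_truncAt : northCount I k = #(truncAt I k) := rfl

theorem mem_truncAt : j ∈ truncAt I k ↔ j ∈ I ∧ j ≤ k := mem_filter

theorem truncAt_truncAt (h : j ≤ k) : truncAt (truncAt I k) j = truncAt I j := by
  ext x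
  simp only [mem_truncAt]
  grind

theorem truncAt_succ_of_mem (h : k + 1 ∈ I) :
    truncAt I (k + 1) = insert (k + 1) (truncAt I k) := by
  ext x
  simp only [mem_insert, mem_truncAt]
  grind

theorem truncAt_succ_of_notMem (h : k + 1 ∉ I) : truncAt I (k + 1) = truncAt I k := by
  ext x
  simp only [mem_truncAt]
  grind

theorem northCount_succ_of_mem (h : k + 1 ∈ I) : northCount I (k + 1) = northCount I k + 1 := by
  rw [northCount_eq_card_truncAt, truncAt_succ_of_mem h,
    card_insert_of_notMem (by simp [mem_truncAt])]
  rfl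

theorem northCount_succ_of_notMem (h : k + 1 ∉ I) : northCount I (k + 1) = northCount I k := by
  rw [northCount_eq_card_truncAt, truncAt_succ_of_notMem h]
  rfl

theorem northCount_le (h : 0 ∉ I) : northCount I k ≤ k := by
  calc northCount I k ≤ #(Icc 1 k) := card_le_card fun i hi => by
        have := mem_truncAt.1 hi
        exact mem_Icc.2 ⟨Nat.one_le_iff_ne_zero.2 (by rintro rfl; exact h this.1), this.2⟩
    _ = k := by simp

theorem northCount_eq_of_truncAt_eq (h : truncAt I k = truncAt J k) (hj : j ≤ k) :
    northCount I j = northCount J j := by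
  rw [northCount_eq_card_truncAt, northCount_eq_card_truncAt, ← truncAt_truncAt hj,
    ← truncAt_truncAt (I := J) hj, h]

theorem northCount_zero : northCount I 0 = if 0 ∈ I then 1 else 0 := by
  rw [northCount_eq_card_truncAt]
  split_ifs with h
  · rw [card_eq_one]
    exact ⟨0, by ext x; simp only [mem_truncAt, mem_singleton]; grind⟩
  · rw [card_eq_zero]
    ext x
    simp only [mem_truncAt, notMem_empty, iff_false]
    grind

theorem truncAt_eq_of_northCount_eq (h : ∀ j ≤ k, northCount I j = northCount J j) :
    truncAt I k = truncAt J k := by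
  ext x
  simp only [mem_truncAt, and_congr_left_iff]
  intro hx
  rcases x with _ | x
  · have h0 := h 0 (Nat.zero_le k)
    rw [northCount_zero, northCount_zero] at h0
    split_ifs at h0 <;> tauto
  · have hx1 := h (x + 1) hx
    have hx0 := h x (by omega)
    grind [northCount_succ_of_mem, northCount_succ_of_notMem]

end Prefixes

theorem card_image_truncAt_succ_le (P : Finset (Finset ℕ)) (k : ℕ) :
    #(P.image (truncAt · (k + 1))) ≤ #(P.image (truncAt · k)) + #(branchPrefixes P k) := by
  set N := P.filter (k + 1 ∈ ·)
  set E := P.filter (k + 1 ∉ ·)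
  have hP : P = N ∪ E := (filter_union_filter_not_eq _ P).symm
  have hN : N.image (truncAt · (k + 1)) = (N.image (truncAt · k)).image (insert (k + 1)) := by
    rw [image_image]
    exact image_congr fun I hI => truncAt_succ_of_mem (mem_filter.1 hI).2
  have hE : E.image (truncAt · (k + 1)) = E.image (truncAt · k) :=
    image_congr fun I hI => truncAt_succ_of_notMem (mem_filter.1 hI).2
  calc #(P.image (truncAt · (k + 1)))
      ≤ #(N.image (truncAt · (k + 1))) + #(E.image (truncAt · (k + 1))) := by
        rw [hP, image_union]
        exact card_union_le _ _
    _ ≤ #(N.image (truncAt · k)) + #(E.image (truncAt · k)) := by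
        rw [hN, hE]
        exact Nat.add_le_add_right card_image_le _
    _ = #(N.image (truncAt · k) ∪ E.image (truncAt · k)) + #(branchPrefixes P k) :=
        (card_union_add_card_inter _ _).symm
    _ = #(P.image (truncAt · k)) + #(branchPrefixes P k) := by rw [← image_union, ← hP]

theorem card_image_truncAt_le (P : Finset (Finset ℕ)) (k : ℕ) :
    #(P.image (truncAt · k)) ≤
      #(P.image (truncAt · 0)) + ∑ j ∈ range k, #(branchPrefixes P j) := by
  induction k with
  | zero => simp
  | succ k ih =>
    rw [sum_range_succ]
    have := card_image_truncAt_succ_le P k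
    omega

theorem exists_last_ne {f g : ℕ → ℕ} {a k : ℕ} (hk : f k = g k) (hak : a ≤ k)
    (ha : f a ≠ g a) :
    ∃ b < k, f b ≠ g b ∧ ∀ j, b < j → j ≤ k → f j = g j := by
  set b := Nat.findGreatest (fun j => f j ≠ g j) k
  have hb : f b ≠ g b := Nat.findGreatest_spec (P := fun j => f j ≠ g j) hak ha
  refine ⟨b, lt_of_le_of_ne (Nat.findGreatest_le k) (fun h => hb (h ▸ hk)), hb, ?_⟩
  intro j hbj hjk
  exact not_not.1 (Nat.findGreatest_is_greatest hbj hjk)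

theorem properCommonPart_of_last_ne {m k b : ℕ} {I J : Finset ℕ} (hkm : k < m) (hbk : b < k)
    (hb : northCount I b ≠ northCount J b)
    (hagree : ∀ j, b < j → j ≤ k → northCount I j = northCount J j)
    (hsep : northCount I (k + 1) ≠ northCount J (k + 1)) : ProperCommonPart m I J (b + 1) k :=
  ⟨by omega, by omega, hkm, hagree, hb, hsep⟩

theorem eq_of_mem_branchPrefixes {m k : ℕ} {P : Finset (Finset ℕ)}
    (hnk : ∀ I ∈ P, ∀ J ∈ P, PathsNonKissing m I J) (hkm : k < m) {S S' : Finset ℕ}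
    (hS : S ∈ branchPrefixes P k) (hS' : S' ∈ branchPrefixes P k) (hcard : #S = #S') :
    S = S' := by
  simp only [branchPrefixes, mem_inter, mem_image, mem_filter] at hS hS'
  obtain ⟨⟨I, ⟨hI, hIk⟩, rfl⟩, ⟨J, ⟨hJ, hJk⟩, hJtrunc⟩⟩ := hS
  obtain ⟨⟨I', ⟨hI', hI'k⟩, rfl⟩, ⟨J', ⟨hJ', hJ'k⟩, hJ'trunc⟩⟩ := hS'
  by_contra hne
  have hk : northCount I k = northCount I' k := hcard
  have hJI : ∀ j ≤ k, northCount J j = northCount I j :=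
    fun j => northCount_eq_of_truncAt_eq hJtrunc
  have hJ'I' : ∀ j ≤ k, northCount J' j = northCount I' j :=
    fun j => northCount_eq_of_truncAt_eq hJ'trunc
  obtain ⟨a, hak, ha⟩ : ∃ a ≤ k, northCount I a ≠ northCount I' a := by
    by_contra! h
    exact hne (truncAt_eq_of_northCount_eq h)
  obtain ⟨b, hbk, hb, hagree⟩ := exists_last_ne hk hak ha
  have hI'J : ProperCommonPart m I' J (b + 1) k := by
    refine properCommonPart_of_last_ne hkm hbk ?_ (fun j hbj hjk => ?_) ?_
    · rw [hJI b hbk.le]; exact Ne.symm hb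
    · rw [hJI j hjk]; exact (hagree j hbj hjk).symm
    · rw [northCount_succ_of_mem hI'k, northCount_succ_of_notMem hJk, hJI k le_rfl]
      omega
  have hJ'I : ProperCommonPart m J' I (b + 1) k := by
    refine properCommonPart_of_last_ne hkm hbk ?_ (fun j hbj hjk => ?_) ?_
    · rw [hJ'I' b hbk.le]; exact Ne.symm hb
    · rw [hJ'I' j hjk]; exact (hagree j hbj hjk).symm
    · rw [northCount_succ_of_notMem hJ'k, northCount_succ_of_mem hIk, hJ'I' k le_rfl]
      omega
  -- Non-kissing makes `I'` enter the common part `[b + 1, k]` northward and `J'` eastward,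
  -- although `I'` and `J'` agree up to step `k`.
  have hbI' : b + 1 ∈ I' := (hnk I' hI' J hJ _ _ hI'J).2 hI'k
  have hbJ' : b + 1 ∉ J' := fun h => hJ'k ((hnk J' hJ' I hI _ _ hJ'I).1 h)
  have hbJ'k : b + 1 ∈ truncAt J' k := by
    rw [hJ'trunc]
    exact mem_truncAt.2 ⟨hbI', hbk⟩
  exact hbJ' (mem_truncAt.1 hbJ'k).1

theorem criticalNode_of_mem_branchPrefixes {m k : ℕ} {A : Finset ℕ} {P : Finset (Finset ℕ)}
    (h0 : ∀ I ∈ P, 0 ∉ I) (hL : ∀ I ∈ P, PathInL m A I) (hkm : k < m) {S : Finset ℕ}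
    (hS : S ∈ branchPrefixes P k) : #S ≤ k ∧ CriticalNode m A (k - #S) #S := by
  simp only [branchPrefixes, mem_inter, mem_image, mem_filter] at hS
  obtain ⟨⟨I, ⟨hI, hIk⟩, rfl⟩, ⟨J, ⟨hJ, hJk⟩, hJtrunc⟩⟩ := hS
  rw [← northCount_eq_card_truncAt]
  have hIn := hL I hI (k + 1) hkm
  have hJn := hL J hJ (k + 1) hkm
  rw [northCount_succ_of_mem hIk] at hIn
  rw [northCount_succ_of_notMem hJk, northCount_eq_of_truncAt_eq hJtrunc le_rfl] at hJn
  have hSk : northCount I k ≤ k := northCount_le (h0 I hI)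
  refine ⟨hSk, ?_, ?_⟩
  · rwa [show k + 1 - northCount I k = k - northCount I k + 1 by omega] at hJn
  · rwa [show k + 1 - (northCount I k + 1) = k - northCount I k by omega] at hIn

theorem sum_card_branchPrefixes_le_numCritical {m : ℕ} {A : Finset ℕ} {P : Finset (Finset ℕ)}
    (h0 : ∀ I ∈ P, 0 ∉ I) (hL : ∀ I ∈ P, PathInL m A I)
    (hnk : ∀ I ∈ P, ∀ J ∈ P, PathsNonKissing m I J) :
    ∑ k ∈ range m, #(branchPrefixes P k) ≤ numCritical m A := by
  rw [← card_sigma, numCritical]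
  refine card_le_card_of_injOn (fun p => (p.1 - #p.2, #p.2)) (fun p hp => ?_)
    (fun p hp q hq hpq => ?_)
  · simp only [coe_sigma, Set.mem_sigma_iff, mem_coe, mem_range] at hp
    obtain ⟨hkS, hcrit⟩ := criticalNode_of_mem_branchPrefixes h0 hL hp.1 hp.2
    simp only [coe_filter, mem_product, mem_range, Set.mem_ofPred_eq]
    exact ⟨⟨by omega, by omega⟩, hcrit⟩
  · obtain ⟨k, S⟩ := p
    obtain ⟨k', S'⟩ := q
    simp only [coe_sigma, Set.mem_sigma_iff, mem_coe, mem_range] at hp hq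
    simp only [Prod.mk.injEq] at hpq
    have hSk := (criticalNode_of_mem_branchPrefixes h0 hL hp.1 hp.2).1
    have hS'k' := (criticalNode_of_mem_branchPrefixes h0 hL hq.1 hq.2).1
    obtain rfl : k = k' := by omega
    rw [eq_of_mem_branchPrefixes hnk hp.1 hp.2 hq.2 hpq.2]

theorem nonKissing_card_le_general (m : ℕ) (A : Finset ℕ)
    (P : Finset (Finset ℕ))
    (hP : ∀ I ∈ P, I ⊆ Finset.Icc 1 m ∧ PathInL m A I)
    (hnk : ∀ I ∈ P, ∀ J ∈ P, PathsNonKissing m I J) :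
    P.card ≤ numCritical m A + 1 := by
  have h0 : ∀ I ∈ P, 0 ∉ I := fun I hI h => by simpa using (hP I hI).1 h
  have hL : ∀ I ∈ P, PathInL m A I := fun I hI => (hP I hI).2
  have hfull : P.image (truncAt · m) = P :=
    (image_congr fun I hI => filter_true_of_mem fun i hi => (mem_Icc.1 ((hP I hI).1 hi)).2).trans
      image_id'
  have hroot : P.image (truncAt · 0) ⊆ {∅} := fun S hS => by
    obtain ⟨I, hI, rfl⟩ := mem_image.1 hS
    refine mem_singleton.2 (filter_eq_empty_iff.2 fun i hi hi0 => h0 I hI ?_)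
    rwa [Nat.le_zero.1 hi0] at hi
  calc #P = #(P.image (truncAt · m)) := by rw [hfull]
    _ ≤ #(P.image (truncAt · 0)) + ∑ k ∈ range m, #(branchPrefixes P k) :=
      card_image_truncAt_le P m
    _ ≤ 1 + numCritical m A := by
      gcongr
      · exact (card_le_card hroot).trans_eq (card_singleton _)
      · exact sum_card_branchPrefixes_le_numCritical h0 hL hnk
    _ = numCritical m A + 1 := add_comm _ _

/-- If `P` is a collection of pairwise non-kissing lattice paths contained in a partial
staircase `L`, then the number of distinct paths in `P` is at most `N(L) + 1`, where
`N(L)` is the number of critical nodes of `L`. -/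
theorem nonKissing_card_le (m : ℕ) (A : Finset ℕ) (hA : A ⊆ Finset.range (m+1))
    (P : Finset (Finset ℕ))
    (hP : ∀ I ∈ P, I ⊆ Finset.Icc 1 m ∧ PathInL m A I)
    (hnk : ∀ I ∈ P, ∀ J ∈ P, PathsNonKissing m I J) :
    P.card ≤ numCritical m A + 1 :=
  nonKissing_card_le_general m A P hP hnk
end
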